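/- Let m ≥ 0 and let (x_0X)^m = a_mX^m + a_{m−1}X^{m−1} + … + a_0 in A[X;D]. If a monomial s = x_{n_1}x_{n_2}⋯x_{n_m} appears with nonzero coefficient in the basis expansion of a_t for some t ≥ 0, then t = m − deg(s) and, for every i = 1, …, m, the partial sum n_1 + n_2 + … + n_i is at most i − 1. -/

import Mathlib

noncomputable section

/-- `A¹`: the free unital associative algebra over `K` on generators `x_0, x_1, x_2, …`,
realized as the monoid algebra of the free monoid on `ℕ`.  The free *non-unital*
algebra `A` sits inside it as the span of the monomials of positive length. -/
abbrev FA (K : Type) [Field K] : Type := MonoidAlgebra K (FreeMonoid ℕ)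

/-- The monomial `x_{i₁} x_{i₂} ⋯ x_{iₙ}` corresponding to the list `[i₁, …, iₙ]`. -/
def mon (K : Type) [Field K] (l : List ℕ) : FA K :=
  MonoidAlgebra.single (FreeMonoid.ofList l) 1

/-- The generator `x_i`. -/
def xg (K : Type) [Field K] (i : ℕ) : FA K := mon K [i]

/-- `A(n)`: the `K`-linear span of the monomials of length `n`. -/
def Agr (K : Type) [Field K] (n : ℕ) : Submodule K (FA K) :=
  Submodule.span K {a | ∃ l : List ℕ, l.length = n ∧ a = mon K l}

/-- The free non-unital algebra `A`: the span of monomials of positive length. -/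
def Apos (K : Type) [Field K] : Submodule K (FA K) :=
  Submodule.span K {a | ∃ l : List ℕ, l ≠ [] ∧ a = mon K l}

/-- `D` is the `K`-derivation with `D(x_i) = x_{i+1}` for every `i`. -/
def IsDer (K : Type) [Field K] (D : FA K →ₗ[K] FA K) : Prop :=
  (∀ a b : FA K, D (a * b) = D a * b + a * D b) ∧ ∀ i : ℕ, D (xg K i) = xg K (i + 1)

/-- `W(k, n, t)`:  `W(k,n,0)` is the set of monomials of length `n` in the letters
`x_0, …, x_{k-1}`, and `W(k,n,t+1) = D(W(k,n,t))`. -/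
def WsetL (K : Type) [Field K] (D : FA K →ₗ[K] FA K) (k n : ℕ) : ℕ → Set (FA K)
  | 0 => {a | ∃ l : List ℕ, l.length = n ∧ (∀ i ∈ l, i < k) ∧ a = mon K l}
  | t + 1 => D '' WsetL K D k n t

/-- `W(k, n) = ⋃ₜ W(k, n, t)`. -/
def Wset (K : Type) [Field K] (D : FA K →ₗ[K] FA K) (k n : ℕ) : Set (FA K) :=
  ⋃ t, WsetL K D k n t

/-- `I_k`: the two-sided ideal of `A` generated by `W(k, 2·100^{k²})`. -/
def Ik (K : Type) [Field K] (D : FA K →ₗ[K] FA K) (k : ℕ) : Submodule K (FA K) :=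
  Submodule.span K
    {a | ∃ u v w : FA K, w ∈ Wset K D k (2 * 100 ^ (k ^ 2)) ∧ a = u * w * v}

/-- `I = Σ_{k > 0} I_k`. -/
def Itot (K : Type) [Field K] (D : FA K →ₗ[K] FA K) : Submodule K (FA K) :=
  ⨆ k : ℕ, ⨆ _ : 1 ≤ k, Ik K D k

/-- `W_k = Σ_{m ≥ 0} A(m·100^{k²}) · W(k, 100^{k²}) · A¹`. -/
def Wk (K : Type) [Field K] (D : FA K →ₗ[K] FA K) (k : ℕ) : Submodule K (FA K) :=
  Submodule.span K {a | ∃ (l : List ℕ) (w v : FA K),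
    (∃ m : ℕ, l.length = m * 100 ^ (k ^ 2)) ∧ w ∈ Wset K D k (100 ^ (k ^ 2)) ∧
    a = mon K l * w * v}

/-- The set `Z_k`.  Here the letter of a monomial `s` in (1-indexed) position
`j` is `l[j-1]?` for the corresponding list `l`. -/
def Zset (K : Type) [Field K] (k : ℕ) : Set (FA K) :=
  {a | (∃ (κ : K) (l : List ℕ) (p q : ℕ), p < q ∧ q ≤ k ∧
          l.length = 100 ^ (k ^ 2) - 1 ∧
          l[3 ^ p * 100 ^ ((k - 1) ^ 2) - 1]? = l[3 ^ q * 100 ^ ((k - 1) ^ 2) - 1]? ∧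
          a = κ • mon K l) ∨
      (∃ (κ : K) (l₁ l₂ : List ℕ) (p q e₁ e₂ : ℕ), p < q ∧ q ≤ k ∧ e₂ < e₁ ∧ 0 < e₂ ∧
          l₁.length = 100 ^ (k ^ 2) - 1 ∧ l₂.length = 100 ^ (k ^ 2) - 1 ∧
          l₁[3 ^ p * 100 ^ ((k - 1) ^ 2) - 1]? = some e₁ ∧
          l₁[3 ^ q * 100 ^ ((k - 1) ^ 2) - 1]? = some e₂ ∧
          l₂[3 ^ p * 100 ^ ((k - 1) ^ 2) - 1]? = some e₂ ∧
          l₂[3 ^ q * 100 ^ ((k - 1) ^ 2) - 1]? = some e₁ ∧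
          (∀ j : ℕ, j + 1 ≠ 3 ^ p * 100 ^ ((k - 1) ^ 2) →
            j + 1 ≠ 3 ^ q * 100 ^ ((k - 1) ^ 2) → l₁[j]? = l₂[j]?) ∧
          a = κ • (mon K l₁ + mon K l₂))}

/-- `B_k = Σ_{m ≥ 0} A(m·100^{k²}) · Z_k · A¹`. -/
def Bk (K : Type) [Field K] (k : ℕ) : Submodule K (FA K) :=
  Submodule.span K {a | ∃ (l : List ℕ) (z v : FA K),
    (∃ m : ℕ, l.length = m * 100 ^ (k ^ 2)) ∧ z ∈ Zset K k ∧ a = mon K l * z * v}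

/-- `B_1 + B_2 + ⋯ + B_k`. -/
def Bsum (K : Type) [Field K] (k : ℕ) : Submodule K (FA K) :=
  ∑ i ∈ Finset.Icc 1 k, Bk K i

/-- The coefficients `a_j^{(m)}` of `(x_0 X)^m = Σ_j a_j^{(m)} X^j` in `A¹[X; D]`:
`a_0^{(0)} = 1`, `a_j^{(0)} = 0` for `j > 0`, and
`a_j^{(m+1)} = x_0 (a_{j-1}^{(m)} + D(a_j^{(m)}))` (with `a_{-1}^{(m)} = 0`). -/
def acoef (K : Type) [Field K] (D : FA K →ₗ[K] FA K) : ℕ → ℕ → FA K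
  | 0, 0 => 1
  | 0, _ + 1 => 0
  | m + 1, 0 => xg K 0 * D (acoef K D m 0)
  | m + 1, j + 1 => xg K 0 * (acoef K D m j + D (acoef K D m (j + 1)))



/-!
Induct on `m` along the recursion for `a_j^{(m)}`, tracking the support of `a_t^{(m)}`: its
words have length `m`, degree `m - t`, and `i`-th prefix sum `< i`. The derivation `D` raises
one letter of a word by one, which trades a unit of `t` for a unit of degree but weakens the
prefix bound to `≤ i`; multiplying by `x_0` on the left shifts every prefix by one
position and restores the strict bound. For `t = 0` the only admissible word is the empty one,
which `D` kills.
-/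

theorem List.sum_modify_add {M : Type*} [AddCommMonoid M] (a : M) :
    ∀ {l : List M} {i : ℕ}, i < l.length → (l.modify i (· + a)).sum = l.sum + a
  | [], _, h => absurd h (Nat.not_lt_zero _)
  | b :: l, 0, _ => by simp [add_right_comm]
  | b :: l, i + 1, h => by
    simp [List.sum_modify_add a (Nat.lt_of_succ_lt_succ h), add_assoc]

def PrefixSumsLt (l : List ℕ) : Prop :=
  ∀ i, 1 ≤ i → i ≤ l.length → (l.take i).sum < i

def PrefixSumsLe (l : List ℕ) : Prop :=
  ∀ i ≤ l.length, (l.take i).sum ≤ i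

theorem PrefixSumsLt.sum_lt_length {l : List ℕ} (h : PrefixSumsLt l) (hl : l ≠ []) :
    l.sum < l.length := by
  simpa using h l.length (List.length_pos_iff.mpr hl) le_rfl

theorem PrefixSumsLt.prefixSumsLe {l : List ℕ} (h : PrefixSumsLt l) : PrefixSumsLe l := by
  rintro (_ | i) hi
  · simp
  · exact (h (i + 1) (Nat.succ_pos i) hi).le

theorem PrefixSumsLt.prefixSumsLe_modify {l : List ℕ} (h : PrefixSumsLt l) (p : ℕ) :
    PrefixSumsLe (l.modify p (· + 1)) := by
  intro i hi
  rw [List.length_modify] at hi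
  rw [List.take_modify]
  by_cases hp : p < (l.take i).length
  · have hi₁ : 1 ≤ i := by rw [List.length_take] at hp; omega
    rw [List.sum_modify_add 1 hp]
    exact h i hi₁ hi
  · rw [List.modify_eq_self (not_lt.mp hp)]
    exact h.prefixSumsLe i hi

theorem PrefixSumsLe.prefixSumsLt_zero_cons {l : List ℕ} (h : PrefixSumsLe l) :
    PrefixSumsLt (0 :: l) := by
  rintro (_ | i) hi₁ hi
  · omega
  · simpa [Nat.lt_succ_iff] using h i (by simpa using hi)

def ballotWords (m t : ℕ) : Set (FreeMonoid ℕ) :=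
  {w | w.toList.length = m ∧ t + w.toList.sum = m ∧ PrefixSumsLt w.toList}

def weakBallotWords (m t : ℕ) : Set (FreeMonoid ℕ) :=
  {w | w.toList.length = m ∧ t + w.toList.sum = m ∧ PrefixSumsLe w.toList}

theorem MonoidAlgebra.map_mem_supported {R M N : Type*} [CommSemiring R]
    (T : MonoidAlgebra R M →ₗ[R] MonoidAlgebra R N) {s : Set M} {t : Set N}
    (hT : ∀ m ∈ s, T (single m 1) ∈ supported R R t) {x : MonoidAlgebra R M}
    (hx : x ∈ supported R R s) : T x ∈ supported R R t := by
  have hle : supported R R s ≤ (supported R R t).comap T := by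
    rw [supported_eq_span_single, Submodule.span_le]
    rintro _ ⟨m, hm, rfl⟩
    exact hT m hm
  exact hle hx

theorem MonoidAlgebra.single_mem_supported {R M : Type*} [CommSemiring R] {s : Set M} {m : M}
    (r : R) (hm : m ∈ s) : single m r ∈ supported R R s := by
  rw [supported_eq_span_single, ← mul_one r, ← smul_eq_mul, ← smul_single]
  exact Submodule.smul_mem _ r (Submodule.subset_span ⟨m, hm, rfl⟩)

section Monomials

variable {K : Type} [Field K]

theorem mon_nil : mon K [] = 1 := rfl

theorem mon_cons (a : ℕ) (l : List ℕ) : mon K (a :: l) = xg K a * mon K l := by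
  simp [mon, xg, MonoidAlgebra.single_mul_single]

theorem xg_mul_mem_supported (a : ℕ) {s t : Set (FreeMonoid ℕ)}
    (h : ∀ w ∈ s, FreeMonoid.of a * w ∈ t) {x : FA K}
    (hx : x ∈ MonoidAlgebra.supported K K s) : xg K a * x ∈ MonoidAlgebra.supported K K t := by
  refine MonoidAlgebra.map_mem_supported (LinearMap.mulLeft K (xg K a)) (fun w hw => ?_) hx
  rw [LinearMap.mulLeft_apply, xg, mon, MonoidAlgebra.single_mul_single, one_mul,
    FreeMonoid.ofList_singleton]
  exact MonoidAlgebra.single_mem_supported 1 (h w hw)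

variable {D : FA K →ₗ[K] FA K}

theorem IsDer.map_one (hD : IsDer K D) : D 1 = 0 := by
  simpa using hD.1 1 1

theorem IsDer.map_mon (hD : IsDer K D) :
    ∀ l : List ℕ, D (mon K l) = ∑ p ∈ Finset.range l.length, mon K (l.modify p (· + 1))
  | [] => by simp [mon_nil, hD.map_one]
  | a :: l => by
    rw [mon_cons, hD.1, hD.2 a, hD.map_mon l, Finset.mul_sum, List.length_cons,
      Finset.sum_range_succ', add_comm]
    simp [mon_cons]

theorem IsDer.map_mem_supported (hD : IsDer K D) {s t : Set (FreeMonoid ℕ)}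
    (h : ∀ w ∈ s, ∀ p < w.toList.length, FreeMonoid.ofList (w.toList.modify p (· + 1)) ∈ t)
    {x : FA K} (hx : x ∈ MonoidAlgebra.supported K K s) :
    D x ∈ MonoidAlgebra.supported K K t := by
  refine MonoidAlgebra.map_mem_supported D (fun w hw => ?_) hx
  rw [show MonoidAlgebra.single w 1 = mon K w.toList from rfl, hD.map_mon]
  exact Submodule.sum_mem _ fun p hp =>
    MonoidAlgebra.single_mem_supported 1 (h w hw p (Finset.mem_range.mp hp))

theorem acoef_mem_supported (hD : IsDer K D) :
    ∀ m t, acoef K D m t ∈ MonoidAlgebra.supported K K (ballotWords m t)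
  | 0, 0 => MonoidAlgebra.single_mem_supported 1
      ⟨rfl, rfl, fun i hi₁ hi => by
        simp only [FreeMonoid.toList_one, List.length_nil] at hi; omega⟩
  | 0, _ + 1 => Submodule.zero_mem _
  | m + 1, 0 => by
    -- the only word of `ballotWords m 0` is empty, so `D` kills `acoef K D m 0`
    have hD0 : D (acoef K D m 0) ∈ MonoidAlgebra.supported K K ∅ := by
      refine hD.map_mem_supported ?_ (acoef_mem_supported hD m 0)
      rintro w ⟨hlen, hsum, hlt⟩ p hp
      have := hlt.sum_lt_length (List.ne_nil_of_length_pos (by omega))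
      omega
    exact xg_mul_mem_supported 0 (fun _ h => h.elim) hD0
  | m + 1, j + 1 => by
    have hj : acoef K D m j ∈ MonoidAlgebra.supported K K (weakBallotWords m j) := by
      refine MonoidAlgebra.supported_mono ?_ (acoef_mem_supported hD m j)
      rintro w ⟨hlen, hsum, hlt⟩
      exact ⟨hlen, hsum, hlt.prefixSumsLe⟩
    have hDj : D (acoef K D m (j + 1)) ∈ MonoidAlgebra.supported K K (weakBallotWords m j) := by
      refine hD.map_mem_supported ?_ (acoef_mem_supported hD m (j + 1))
      rintro w ⟨hlen, hsum, hlt⟩ p hp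
      simp only [weakBallotWords, Set.mem_ofPred_eq, FreeMonoid.toList_ofList, List.length_modify,
        List.sum_modify_add 1 hp]
      exact ⟨hlen, by omega, hlt.prefixSumsLe_modify p⟩
    refine xg_mul_mem_supported 0 ?_ (Submodule.add_mem _ hj hDj)
    rintro w ⟨hlen, hsum, hle⟩
    have hw : (FreeMonoid.of 0 * w).toList = 0 :: w.toList := rfl
    simp only [ballotWords, Set.mem_ofPred_eq, hw, List.length_cons, List.sum_cons]
    exact ⟨by omega, by omega, hle.prefixSumsLt_zero_cons⟩

end Monomials

theorem coeff_of_x0X_pow_general (K : Type) [Field K] (D : FA K →ₗ[K] FA K) (hD : IsDer K D)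
    (m t : ℕ) (l : List ℕ)
    (h : (acoef K D m t).coeff (FreeMonoid.ofList l) ≠ 0) :
    t + l.sum = m ∧ ∀ i, 1 ≤ i → i ≤ m → (l.take i).sum < i := by
  obtain ⟨hlen, hsum, hlt⟩ : FreeMonoid.ofList l ∈ ballotWords m t :=
    MonoidAlgebra.mem_supported.1 (acoef_mem_supported hD m t) (Finsupp.mem_support_iff.2 h)
  exact ⟨hsum, fun i hi₁ hi => hlt i hi₁ (hlen ▸ hi)⟩

/-- Lemma 6: if the monomial `s = x_{n₁} ⋯ x_{n_m}` (given by the list `l = [n₁, …, n_m]`)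
appears with a nonzero coefficient in the coefficient `a_t` of `(x_0X)^m = Σ_j a_j X^j`,
then `t = m − deg(s)` and `n₁ + ⋯ + nᵢ ≤ i − 1` for every `i = 1, …, m`. -/
theorem coeff_of_x0X_pow (K : Type) [Field K] (D : FA K →ₗ[K] FA K) (hD : IsDer K D)
    (m t : ℕ) (l : List ℕ) (hl : l.length = m)
    (h : (acoef K D m t).coeff (FreeMonoid.ofList l) ≠ 0) :
    t + l.sum = m ∧ ∀ i, 1 ≤ i → i ≤ m → (l.take i).sum < i :=
  coeff_of_x0X_pow_general K D hD m t l h
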